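/- Let G be a finite abelian group of order q, Y a finite set, V a channel (G, Y, V), H a subgroup of G, and T a transversal of H in G, so that every u ∈ G decomposes uniquely as u = b(u) + v(u) with b(u) ∈ H and v(u) ∈ T. Define the error event E = { (u, y) ∈ G × Y : there exists ũ ∈ b(u) + T with ũ ≠ u and V(y|ũ) ≥ V(y|u) }. Then the probability of E under uniform input, Σ_{(u,y)∈E} (1/q)·V(y|u), is at most q²·Σ_{d ∈ G\H} Z_d(V). -/
import Mathlib


open Finset

/-- Bhattacharyya distance between two input symbols. -/
noncomputable def Zpair {G Y : Type} [Fintype Y] (W : G → Y → ℝ) (x x' : G) : ℝ :=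
  ∑ y : Y, Real.sqrt (W x y * W x' y)

/-- `Z_d(V) = (1/q)·Σ_{x∈G} Z(V_{x,x+d})`. -/
noncomputable def Zd {G Y : Type} [Fintype G] [Fintype Y] [Add G]
    (W : G → Y → ℝ) (d : G) : ℝ :=
  (1 / (Fintype.card G : ℝ)) * ∑ x : G, Zpair W x (x + d)

lemma Zpair_nonneg {G Y : Type} [Fintype Y] (W : G → Y → ℝ) (x x' : G) : 0 ≤ Zpair W x x' :=
  Finset.sum_nonneg fun _ _ => Real.sqrt_nonneg _

/-- the probability of the error event `E` under uniform input is at most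
`q²·Σ_{d ∈ G\H} Z_d(V)`. -/
theorem error_event_prob_le
    {G Y : Type} [Fintype G] [AddCommGroup G] [DecidableEq G] [Fintype Y]
    (V : G → Y → ℝ) (hV0 : ∀ x y, 0 ≤ V x y) (hV1 : ∀ x, ∑ y, V x y = 1)
    (H : AddSubgroup G) [DecidablePred (· ∈ H)]
    (T : Finset G)
    -- `T` is a transversal of `H` in `G`: it contains exactly one element of each coset
    (hT : ∀ g : G, ∃! t, t ∈ T ∧ g - t ∈ H)
    -- the unique decomposition `u = b(u) + v(u)` with `b(u) ∈ H` and `v(u) ∈ T`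
    (b v : G → G)
    (hbv : ∀ u : G, b u ∈ H ∧ v u ∈ T ∧ u = b u + v u)
    (E : Set (G × Y))
    (hE : E = {uy : G × Y |
      ∃ t ∈ T, b uy.1 + t ≠ uy.1 ∧ V uy.1 uy.2 ≤ V (b uy.1 + t) uy.2}) :
    ∑ u : G, ∑ y : Y,
        Set.indicator E (fun _ => (1 / (Fintype.card G : ℝ)) * V u y) (u, y) ≤
      (Fintype.card G : ℝ) ^ 2 * ∑ d ∈ Finset.univ.filter (fun d : G => d ∉ H), Zd V d := by
  classical
  set q : ℝ := (Fintype.card G : ℝ) with hqdef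
  have hq1 : (1 : ℝ) ≤ q := by
    have h : 1 ≤ Fintype.card G := Fintype.card_pos
    rw [hqdef]
    exact_mod_cast h
  have hqinv : (0 : ℝ) ≤ 1 / q := by positivity
  -- pointwise union bound
  have key : ∀ u y, Set.indicator E (fun _ => (1 / q) * V u y) (u, y) ≤
      (1 / q) * ∑ t ∈ T.filter (fun t => b u + t ≠ u),
        Real.sqrt (V u y * V (b u + t) y) := by
    intro u y
    by_cases h : (u, y) ∈ E
    · rw [Set.indicator_of_mem h]
      rw [hE] at h
      obtain ⟨t, ht, hne, hle⟩ := h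
      have h1 : V u y ≤ Real.sqrt (V u y * V (b u + t) y) := by
        rw [Real.sqrt_mul (hV0 u y)]
        calc V u y = Real.sqrt (V u y) * Real.sqrt (V u y) :=
              (Real.mul_self_sqrt (hV0 u y)).symm
          _ ≤ Real.sqrt (V u y) * Real.sqrt (V (b u + t) y) := by
              gcongr
      have h2 : Real.sqrt (V u y * V (b u + t) y) ≤
          ∑ t' ∈ T.filter (fun t' => b u + t' ≠ u),
            Real.sqrt (V u y * V (b u + t') y) :=
        Finset.single_le_sum (f := fun t' => Real.sqrt (V u y * V (b u + t') y))
          (fun _ _ => Real.sqrt_nonneg _)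
          (Finset.mem_filter.mpr ⟨ht, hne⟩)
      exact mul_le_mul_of_nonneg_left (h1.trans h2) hqinv
    · rw [Set.indicator_of_notMem h]
      have : (0 : ℝ) ≤ ∑ t ∈ T.filter (fun t => b u + t ≠ u),
          Real.sqrt (V u y * V (b u + t) y) :=
        Finset.sum_nonneg fun _ _ => Real.sqrt_nonneg _
      positivity
  calc ∑ u : G, ∑ y : Y, Set.indicator E (fun _ => (1 / q) * V u y) (u, y)
      ≤ ∑ u : G, ∑ y : Y, (1 / q) * ∑ t ∈ T.filter (fun t => b u + t ≠ u),
          Real.sqrt (V u y * V (b u + t) y) := by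
        exact Finset.sum_le_sum fun u _ => Finset.sum_le_sum fun y _ => key u y
    _ = ∑ u : G, (1 / q) * ∑ t ∈ T.filter (fun t => b u + t ≠ u),
          Zpair V u (b u + t) := by
        refine Finset.sum_congr rfl fun u _ => ?_
        rw [← Finset.mul_sum, Finset.sum_comm]
        rfl
    _ ≤ ∑ u : G, (1 / q) * ∑ d ∈ Finset.univ.filter (fun d : G => d ∉ H),
          Zpair V u (u + d) := by
        refine Finset.sum_le_sum fun u _ => mul_le_mul_of_nonneg_left ?_ hqinv
        have hrw : ∀ t : G, u + (b u + t - u) = b u + t := fun t => by abel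
        have hinj : Set.InjOn (fun t => b u + t - u)
            (T.filter (fun t => b u + t ≠ u)) := by
          intro t1 _ t2 _ h
          simpa using h
        calc ∑ t ∈ T.filter (fun t => b u + t ≠ u), Zpair V u (b u + t)
            = ∑ d ∈ (T.filter (fun t => b u + t ≠ u)).image (fun t => b u + t - u),
                Zpair V u (u + d) := by
              rw [Finset.sum_image hinj]
              exact Finset.sum_congr rfl fun t _ => by rw [hrw]
          _ ≤ ∑ d ∈ Finset.univ.filter (fun d : G => d ∉ H), Zpair V u (u + d) := by
              refine Finset.sum_le_sum_of_subset_of_nonneg ?_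
                (fun _ _ _ => Zpair_nonneg _ _ _)
              intro d hd
              obtain ⟨t, htf, rfl⟩ := Finset.mem_image.mp hd
              obtain ⟨ht, hne⟩ := Finset.mem_filter.mp htf
              obtain ⟨hbH, hvT, huv⟩ := hbv u
              refine Finset.mem_filter.mpr ⟨Finset.mem_univ _, fun hH => hne ?_⟩
              have e0 : b u + v u - u = 0 := by rw [← huv]; abel
              have hd' : t - v u ∈ H := by
                have e : t - v u = (b u + t - u) - (b u + v u - u) := by abel
                rw [e, e0, sub_zero]; exact hH
              have h1 : v u - t ∈ H := by
                have := H.neg_mem hd'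
                simpa using this
              obtain ⟨t', ht', huniq⟩ := hT (v u)
              have e1 : t = t' := huniq t ⟨ht, h1⟩
              have e2 : v u = t' := huniq (v u) ⟨hvT, by simpa using H.zero_mem⟩
              rw [e1.trans e2.symm, ← huv]
    _ = ∑ d ∈ Finset.univ.filter (fun d : G => d ∉ H), Zd V d := by
        simp only [Finset.mul_sum]
        rw [Finset.sum_comm]
        exact Finset.sum_congr rfl fun d _ => by rw [Zd, Finset.mul_sum]
    _ ≤ q ^ 2 * ∑ d ∈ Finset.univ.filter (fun d : G => d ∉ H), Zd V d := by
        have hnn : (0 : ℝ) ≤ ∑ d ∈ Finset.univ.filter (fun d : G => d ∉ H), Zd V d := by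
          refine Finset.sum_nonneg fun d _ => ?_
          exact mul_nonneg hqinv (Finset.sum_nonneg fun x _ => Zpair_nonneg _ _ _)
        exact le_mul_of_one_le_left hnn (by nlinarith : (1:ℝ) ≤ q ^ 2)
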